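/- arXiv:2209.11827 — 2 statements merged into one kernel-verified Lean document; each statement's English description precedes it below -/
import Mathlib

section
/- For ℓ < 0 < u, a pair (x, y) with ℓ ≤ x ≤ u satisfies y = max(x, 0) if and only if there exists μ ∈ {0, 1} such that y ≥ 0, y ≥ x, y ≤ x − (1 − μ)·ℓ, and y ≤ μ·u. That is, the mixed-integer linear constraints exactly characterize the graph of ReLU on [ℓ, u]. -/
/-- The mixed-integer linear constraints exactly characterize the graph of
ReLU on `[ℓ, u]` with `ℓ < 0 < u`. -/
theorem relu_mip_exact (ℓ u x y : ℝ) (hℓ : ℓ < 0) (hu : 0 < u)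
    (hxl : ℓ ≤ x) (hxu : x ≤ u) :
    y = max x 0 ↔
      ∃ μ : ℝ, (μ = 0 ∨ μ = 1) ∧ y ≥ 0 ∧ y ≥ x ∧ y ≤ x - (1 - μ) * ℓ ∧ y ≤ μ * u := by
  constructor
  · rintro rfl
    rcases le_or_gt x 0 with h | h
    · exact ⟨0, Or.inl rfl, ⟨by simp [max_eq_right h], by simp [max_eq_right h, h], by simp [max_eq_right h]; nlinarith, by simp [max_eq_right h]⟩⟩
    · exact ⟨1, Or.inr rfl, ⟨by simp [max_eq_left h.le, h.le], by simp [max_eq_left h.le], by simp [max_eq_left h.le], by simpa [max_eq_left h.le] using hxu⟩⟩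
  · rintro ⟨μ, hμ | hμ, h0, hx, h1, h2⟩ <;> subst hμ <;>
      rcases le_total x 0 with h | h <;>
      simp_all [max_eq_right, max_eq_left] <;> linarith
end

section
/- For ℓ < 0 < u and any α ∈ [0,1], every point (x, max(x,0)) with ℓ ≤ x ≤ u satisfies the simplified linear constraints α·x ≤ max(x,0) ≤ (u/(u-ℓ))·x − (u·ℓ)/(u-ℓ). Hence the simplified linear relaxation is a sound over-approximation of the ReLU graph on [ℓ,u]. -/
/-- The simplified linear (CROWN-style) relaxation is a sound over-approximation
of the ReLU graph on `[ℓ, u]` with `ℓ < 0 < u`, for any `α ∈ [0,1]`. -/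
theorem relu_simplified_relaxation_sound (ℓ u x α : ℝ) (hℓ : ℓ < 0) (hu : 0 < u)
    (hα0 : 0 ≤ α) (hα1 : α ≤ 1) (hxl : ℓ ≤ x) (hxu : x ≤ u) :
    α * x ≤ max x 0 ∧ max x 0 ≤ (u / (u - ℓ)) * x - (u * ℓ) / (u - ℓ) := by
  have hd : 0 < u - ℓ := by linarith
  constructor
  · rcases le_or_gt x 0 with h | h
    · calc α * x ≤ α * 0 := by nlinarith
        _ ≤ max x 0 := by simp
    · calc α * x ≤ 1 * x := by nlinarith
        _ ≤ max x 0 := by simp [h.le]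
  · rw [div_mul_eq_mul_div, div_sub_div_same, le_div_iff₀ hd]
    rcases le_or_gt x 0 with h | h
    · rw [max_eq_right h]; nlinarith
    · rw [max_eq_left h.le]; nlinarith
end
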